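/- Let N = 2g + 2 be even, let v_1,...,v_N be arbitrary real numbers, and β_0 = 0, β_1,...,β_{N−1} real constants. Write the transition matrix T(λ) = V_N(λ + β_{N−1}) ⋯ V_1(λ) as T(λ) = [[A(λ), B(λ)], [C(λ), D(λ)]]. Then A(λ) and D(λ) are monic polynomials in λ of degree g + 1, B(λ) is a polynomial of degree at most g with coefficient of λ^g equal to v, and C(λ) is a polynomial of degree at most g + 1 with coefficient of λ^{g+1} equal to v, where v = v_1 + ⋯ + v_N. Consequently P(λ) = tr T(λ) has the form 2λ^{g+1} + I_0 λ^g + (lower order terms). -/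
import Mathlib


open Polynomial in
/-- The matrix V_n(λ + b) with polynomial entries: rows (v_n, 1), (λ + b + v_n², v_n). -/
noncomputable def polyV (w b : ℝ) : Matrix (Fin 2) (Fin 2) (Polynomial ℝ) :=
  !![C w, 1; X + C b + C (w ^ 2), C w]

/-- Partial transition matrix with polynomial entries:
`polyT v β k = V_k(λ+β_{k-1}) ⋯ V_2(λ+β_1) V_1(λ+β_0)`. -/
noncomputable def polyT (v β : ℕ → ℝ) : ℕ → Matrix (Fin 2) (Fin 2) (Polynomial ℝ)
  | 0 => 1
  | k + 1 => polyV (v (k + 1)) (β k) * polyT v β k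

open Polynomial

lemma polyV_mul (w b : ℝ) (M : Matrix (Fin 2) (Fin 2) (Polynomial ℝ)) :
    (polyV w b * M) 0 0 = C w * M 0 0 + M 1 0 ∧
    (polyV w b * M) 0 1 = C w * M 0 1 + M 1 1 ∧
    (polyV w b * M) 1 0 = (X + C (b + w^2)) * M 0 0 + C w * M 1 0 ∧
    (polyV w b * M) 1 1 = (X + C (b + w^2)) * M 0 1 + C w * M 1 1 := by
  simp [polyV, Matrix.mul_apply, Fin.sum_univ_two, C_add]
  ring_nf
  tauto

lemma coeff_top {p : Polynomial ℝ} {d n : ℕ} (h : p.degree ≤ d) (hn : d < n) :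
    p.coeff n = 0 :=
  coeff_eq_zero_of_degree_lt (lt_of_le_of_lt h (by exact_mod_cast hn))

lemma deg_cw {p q : Polynomial ℝ} (w : ℝ) {d : ℕ} (hp : p.degree ≤ d) (hq : q.degree ≤ d) :
    (C w * p + q).degree ≤ d := by
  refine le_trans (degree_add_le _ _) (max_le ?_ hq)
  calc (C w * p).degree ≤ (C w).degree + p.degree := degree_mul_le _ _
    _ ≤ 0 + (d : WithBot ℕ) := add_le_add degree_C_le hp
    _ = d := by simp

lemma coeff_cw (p q : Polynomial ℝ) (w : ℝ) (n : ℕ) :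
    (C w * p + q).coeff n = w * p.coeff n + q.coeff n := by
  simp [coeff_C_mul]

lemma deg_xc {p q : Polynomial ℝ} (c w : ℝ) {d : ℕ} (hp : p.degree ≤ d)
    (hq : q.degree ≤ ((d + 1 : ℕ) : WithBot ℕ)) :
    ((X + C c) * p + C w * q).degree ≤ ((d + 1 : ℕ) : WithBot ℕ) := by
  refine le_trans (degree_add_le _ _) (max_le ?_ ?_)
  · calc ((X + C c) * p).degree ≤ (X + C c).degree + p.degree := degree_mul_le _ _
      _ ≤ 1 + (d : WithBot ℕ) := add_le_add (le_of_eq (degree_X_add_C c)) hp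
      _ = ((d + 1 : ℕ) : WithBot ℕ) := by push_cast; ring
  · calc (C w * q).degree ≤ (C w).degree + q.degree := degree_mul_le _ _
      _ ≤ 0 + ((d + 1 : ℕ) : WithBot ℕ) := add_le_add degree_C_le hq
      _ = ((d + 1 : ℕ) : WithBot ℕ) := by simp

lemma coeff_xc (p q : Polynomial ℝ) (c w : ℝ) (n : ℕ) :
    ((X + C c) * p + C w * q).coeff (n + 1)
      = p.coeff n + c * p.coeff (n + 1) + w * q.coeff (n + 1) := by
  rw [add_mul, coeff_add, coeff_add, coeff_X_mul, coeff_C_mul, coeff_C_mul]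

def EvenShape (d : ℕ) (s : ℝ) (M : Matrix (Fin 2) (Fin 2) (Polynomial ℝ)) : Prop :=
    (M 0 0).degree ≤ (d + 1 : ℕ) ∧ (M 0 0).coeff (d + 1) = 1 ∧
    (M 1 1).degree ≤ (d + 1 : ℕ) ∧ (M 1 1).coeff (d + 1) = 1 ∧
    (M 0 1).degree ≤ (d : ℕ) ∧ (M 0 1).coeff d = s ∧
    (M 1 0).degree ≤ (d + 1 : ℕ) ∧ (M 1 0).coeff (d + 1) = s

lemma two_step {d : ℕ} {s : ℝ} {M : Matrix (Fin 2) (Fin 2) (Polynomial ℝ)}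
    (h : EvenShape d s M) (w1 b1 w2 b2 : ℝ) :
    EvenShape (d + 1) (s + w1 + w2) (polyV w2 b2 * (polyV w1 b1 * M)) := by
  obtain ⟨hA, hAc, hD, hDc, hB, hBc, hC, hCc⟩ := h
  obtain ⟨e1, e2, e3, e4⟩ := polyV_mul w1 b1 M
  -- odd-stage facts
  have oA : ((polyV w1 b1 * M) 0 0).degree ≤ (d + 1 : ℕ) := e1 ▸ deg_cw w1 hA hC
  have oAc : ((polyV w1 b1 * M) 0 0).coeff (d + 1) = w1 + s := by
    rw [e1, coeff_cw, hAc, hCc]; ring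
  have oB : ((polyV w1 b1 * M) 0 1).degree ≤ (d + 1 : ℕ) := by
    rw [e2]; exact deg_cw w1 (le_trans hB (by exact_mod_cast Nat.le_succ d)) hD
  have oBc : ((polyV w1 b1 * M) 0 1).coeff (d + 1) = 1 := by
    rw [e2, coeff_cw, coeff_top hB (Nat.lt_succ_self d), hDc]; ring
  have oC : ((polyV w1 b1 * M) 1 0).degree ≤ (d + 2 : ℕ) := by
    rw [e3]; exact deg_xc _ _ hA (le_trans hC (by exact_mod_cast Nat.le_succ _))
  have oCc : ((polyV w1 b1 * M) 1 0).coeff (d + 2) = 1 := by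
    rw [e3, coeff_xc, hAc, coeff_top hA (Nat.lt_succ_self _), coeff_top hC (Nat.lt_succ_self _)]
    ring
  have oD : ((polyV w1 b1 * M) 1 1).degree ≤ (d + 1 : ℕ) := by
    rw [e4]; exact deg_xc _ _ hB hD
  have oDc : ((polyV w1 b1 * M) 1 1).coeff (d + 1) = w1 + s := by
    rw [e4, coeff_xc, hBc, coeff_top hB (Nat.lt_succ_self d), hDc]; ring
  obtain ⟨f1, f2, f3, f4⟩ := polyV_mul w2 b2 (polyV w1 b1 * M)
  refine ⟨?_, ?_, ?_, ?_, ?_, ?_, ?_, ?_⟩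
  · rw [f1]
    exact deg_cw w2 (le_trans oA (by exact_mod_cast Nat.le_succ (d + 1))) oC
  · have oCc' : ((polyV w1 b1 * M) 1 0).coeff (d + 1 + 1) = 1 := oCc
    have oA' : ((polyV w1 b1 * M) 0 0).coeff (d + 1 + 1) = 0 :=
      coeff_top oA (Nat.lt_succ_self _)
    rw [f1]
    show (C w2 * _ + _).coeff (d + 1 + 1) = 1
    rw [coeff_cw, oA', oCc']; ring
  · rw [f4]; exact deg_xc _ _ oB (le_trans oD (by exact_mod_cast Nat.le_succ _))
  · rw [f4, coeff_xc, oBc, coeff_top oB (Nat.lt_succ_self _),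
      coeff_top oD (Nat.lt_succ_self _)]; ring
  · rw [f2]; exact deg_cw w2 oB oD
  · rw [f2, coeff_cw, oBc, oDc]; ring
  · rw [f3]; exact deg_xc _ _ oA oC
  · have oCc' : ((polyV w1 b1 * M) 1 0).coeff (d + 1 + 1) = 1 := oCc
    have oA' : ((polyV w1 b1 * M) 0 0).coeff (d + 1 + 1) = 0 :=
      coeff_top oA (Nat.lt_succ_self _)
    rw [f3, coeff_xc, oAc, oA', oCc']; ring

lemma base_shape (w1 b1 w2 b2 : ℝ) : EvenShape 0 (w1 + w2) (polyV w2 b2 * polyV w1 b1) := by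
  obtain ⟨e1, e2, e3, e4⟩ := polyV_mul w2 b2 (polyV w1 b1)
  have h00 : polyV w1 b1 0 0 = C w1 := by simp [polyV]
  have h01 : polyV w1 b1 0 1 = 1 := by simp [polyV]
  have h10 : polyV w1 b1 1 0 = X + C (b1 + w1 ^ 2) := by simp [polyV, C_add]; ring
  have h11 : polyV w1 b1 1 1 = C w1 := by simp [polyV]
  simp only [h00, h01, h10, h11] at e1 e2 e3 e4
  refine ⟨?_, ?_, ?_, ?_, ?_, ?_, ?_, ?_⟩
  · rw [e1]; compute_degree!
  · rw [e1]; simp [coeff_add, coeff_C, coeff_X, coeff_C_mul, pow_two]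
  · rw [e4]; compute_degree!
  · rw [e4]; simp [coeff_add, coeff_C, coeff_X, coeff_C_mul, coeff_one, mul_add, pow_two]
  · rw [e2]; compute_degree!
  · rw [e2]; simp [coeff_add, coeff_C, coeff_C_mul, coeff_one]; ring
  · rw [e3]; compute_degree!
  · rw [e3]
    simp [add_mul, mul_add, coeff_add, coeff_C, coeff_X, coeff_C_mul, coeff_X_mul, pow_two]

lemma shape_polyT (v β : ℕ → ℝ) (k : ℕ) :
    EvenShape k (∑ n ∈ Finset.Icc 1 (2 * k + 2), v n) (polyT v β (2 * k + 2)) := by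
  induction k with
  | zero =>
    have h2 : polyT v β 2 = polyV (v 2) (β 1) * (polyV (v 1) (β 0) * 1) := rfl
    have hs : ∑ n ∈ Finset.Icc 1 (2 * 0 + 2), v n = v 1 + v 2 := by
      show ∑ n ∈ Finset.Icc 1 2, v n = _
      rw [show (2 : ℕ) = 1 + 1 from rfl, Finset.sum_Icc_succ_top (by norm_num),
        Finset.Icc_self, Finset.sum_singleton]
    rw [hs]
    show EvenShape 0 (v 1 + v 2) (polyT v β 2)
    rw [h2, mul_one]
    exact base_shape (v 1) (β 0) (v 2) (β 1)
  | succ k ih =>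
    have e : 2 * (k + 1) + 2 = (2 * k + 2 + 1) + 1 := by ring
    have h : polyT v β (2 * (k + 1) + 2)
        = polyV (v (2 * k + 2 + 1 + 1)) (β (2 * k + 2 + 1))
          * (polyV (v (2 * k + 2 + 1)) (β (2 * k + 2)) * polyT v β (2 * k + 2)) := by
      rw [e]; rfl
    have hs : ∑ n ∈ Finset.Icc 1 (2 * (k + 1) + 2), v n
        = (∑ n ∈ Finset.Icc 1 (2 * k + 2), v n) + v (2 * k + 2 + 1) + v (2 * k + 2 + 1 + 1) := by
      rw [e, Finset.sum_Icc_succ_top (by omega), Finset.sum_Icc_succ_top (by omega)]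
    rw [h, hs]
    exact two_step ih _ _ _ _

/-- for N = 2g+2 even, the entries A, D of T(λ) are monic of degree g+1,
B has degree ≤ g with coefficient of λ^g equal to v, C has degree ≤ g+1 with coefficient
of λ^{g+1} equal to v; hence P(λ) = tr T(λ) = 2λ^{g+1} + I₀λ^g + (lower order). -/
theorem transition_matrix_entries_even (g : ℕ) (hg : 1 ≤ g) (v β : ℕ → ℝ) (hβ0 : β 0 = 0) :
    (polyT v β (2 * g + 2) 0 0).Monic ∧
    (polyT v β (2 * g + 2) 0 0).natDegree = g + 1 ∧
    (polyT v β (2 * g + 2) 1 1).Monic ∧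
    (polyT v β (2 * g + 2) 1 1).natDegree = g + 1 ∧
    (polyT v β (2 * g + 2) 0 1).degree ≤ (g : WithBot ℕ) ∧
    (polyT v β (2 * g + 2) 0 1).coeff g = ∑ n ∈ Finset.Icc 1 (2 * g + 2), v n ∧
    (polyT v β (2 * g + 2) 1 0).degree ≤ ((g + 1 : ℕ) : WithBot ℕ) ∧
    (polyT v β (2 * g + 2) 1 0).coeff (g + 1) = ∑ n ∈ Finset.Icc 1 (2 * g + 2), v n ∧
    (Matrix.trace (polyT v β (2 * g + 2))).degree ≤ ((g + 1 : ℕ) : WithBot ℕ) ∧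
    (Matrix.trace (polyT v β (2 * g + 2))).coeff (g + 1) = 2 := by
  obtain ⟨hA, hAc, hD, hDc, hB, hBc, hC, hCc⟩ := shape_polyT v β g
  have degA : (polyT v β (2 * g + 2) 0 0).degree = ((g + 1 : ℕ) : WithBot ℕ) :=
    le_antisymm hA (le_degree_of_ne_zero (by rw [hAc]; norm_num))
  have degD : (polyT v β (2 * g + 2) 1 1).degree = ((g + 1 : ℕ) : WithBot ℕ) :=
    le_antisymm hD (le_degree_of_ne_zero (by rw [hDc]; norm_num))
  have ndA : (polyT v β (2 * g + 2) 0 0).natDegree = g + 1 := natDegree_eq_of_degree_eq_some degA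
  have ndD : (polyT v β (2 * g + 2) 1 1).natDegree = g + 1 := natDegree_eq_of_degree_eq_some degD
  have tr : Matrix.trace (polyT v β (2 * g + 2))
      = polyT v β (2 * g + 2) 0 0 + polyT v β (2 * g + 2) 1 1 := Matrix.trace_fin_two _
  refine ⟨?_, ndA, ?_, ndD, hB, hBc, hC, hCc, ?_, ?_⟩
  · unfold Polynomial.Monic
    rw [Polynomial.leadingCoeff, ndA, hAc]
  · unfold Polynomial.Monic
    rw [Polynomial.leadingCoeff, ndD, hDc]
  · rw [tr]
    exact le_trans (degree_add_le _ _) (max_le hA hD)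
  · rw [tr, coeff_add, hAc, hDc]; norm_num
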